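/- Let (B₁, B₂) be a basis pair of a separable Hilbert space and suppose ρ : ℕ → B₁ is a 'best ordering', i.e., N ↦ μ(π_N U) is decreasing where U = [(B₁,ρ),(B₂,τ)]. Then for any other ordering ρ' of B₁ with U' = [(B₁,ρ'),(B₂,τ)], one has μ(R_N U') ≥ μ(R_N U) for all N; in particular ρ ≺ ρ' and every best ordering is optimal. -/

import Mathlib

/-!
Among the first `N + 1` rows of `U` (indices `0, …, N` under `ρ`) at least one sits at an index
`≥ N` under `ρ'`. Since `ρ` is a best ordering, that row's coherence bounds `μ(R_N U)` from
above, while it is one of the rows over which `μ(R_N U')` takes its supremum.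
-/

open scoped InnerProductSpace

variable {H : Type*} [NormedAddCommGroup H] [InnerProductSpace ℂ H]

/-- The line coherence `μ(π_N U)` of `U = [(B₁,ρ),(B₂,τ)]`, `U_{m,n} = ⟨τ(n), ρ(m)⟩`. -/
noncomputable def muPi {B₁ B₂ : Set H} (ρ : ℕ ≃ B₁) (τ : ℕ ≃ B₂) (N : ℕ) : ℝ :=
  ⨆ n : ℕ, ‖(⟪(τ n : H), (ρ N : H)⟫_ℂ : ℂ)‖ ^ 2

/-- The block coherence `μ(R_N U) = sup_{M ≥ N} μ(π_M U)`. -/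
noncomputable def muR {B₁ B₂ : Set H} (ρ : ℕ ≃ B₁) (τ : ℕ ≃ B₂) (N : ℕ) : ℝ :=
  ⨆ M : {M : ℕ // N ≤ M}, muPi ρ τ M

lemma Function.Injective.exists_le_le_apply {f : ℕ → ℕ} (hf : Function.Injective f)
    (N : ℕ) : ∃ K ≤ N, N ≤ f K := by
  by_contra! h
  have hmaps : ∀ K ∈ Finset.range (N + 1), f K ∈ Finset.range N := fun K hK =>
    Finset.mem_range.2 (h K (Nat.lt_succ_iff.1 (Finset.mem_range.1 hK)))
  obtain ⟨a, -, b, -, hab, hfab⟩ :=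
    Finset.exists_ne_map_eq_of_card_lt_of_maps_to (by simp) hmaps
  exact hab (hf hfab)

section Coherence

variable {B₁ B₂ : Set H}

lemma muPi_le_one (hB₁ : Orthonormal ℂ ((↑) : B₁ → H)) (hB₂ : Orthonormal ℂ ((↑) : B₂ → H))
    (ρ : ℕ ≃ B₁) (τ : ℕ ≃ B₂) (N : ℕ) : muPi ρ τ N ≤ 1 := by
  refine ciSup_le fun n => ?_
  have h := norm_inner_le_norm (𝕜 := ℂ) (τ n : H) (ρ N : H)
  rw [hB₁.1 (ρ N), hB₂.1 (τ n), one_mul] at h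
  exact pow_le_one₀ (norm_nonneg _) h

lemma muPi_le_muR (hB₁ : Orthonormal ℂ ((↑) : B₁ → H)) (hB₂ : Orthonormal ℂ ((↑) : B₂ → H))
    (ρ : ℕ ≃ B₁) (τ : ℕ ≃ B₂) {N M : ℕ} (hNM : N ≤ M) : muPi ρ τ M ≤ muR ρ τ N :=
  le_ciSup (f := fun M : {M : ℕ // N ≤ M} => muPi ρ τ M)
    ⟨1, Set.forall_mem_range.2 fun M => muPi_le_one hB₁ hB₂ ρ τ M⟩ ⟨M, hNM⟩

lemma muR_le_muPi_of_antitone {ρ : ℕ ≃ B₁} {τ : ℕ ≃ B₂} (hρ : Antitone (muPi ρ τ))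
    {K N : ℕ} (hKN : K ≤ N) : muR ρ τ N ≤ muPi ρ τ K :=
  ciSup_le fun M => hρ (hKN.trans M.2)

lemma muPi_symm_apply (ρ ρ' : ℕ ≃ B₁) (τ : ℕ ≃ B₂) (K : ℕ) :
    muPi ρ' τ (ρ'.symm (ρ K)) = muPi ρ τ K := by
  simp only [muPi, Equiv.apply_symm_apply]

end Coherence

/-- If `ρ` is a best ordering of the basis pair `(B₁, B₂)`, i.e. `N ↦ μ(π_N U)` is
decreasing for `U = [(B₁,ρ),(B₂,τ)]`, then for any other ordering `ρ'` of `B₁`, with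
`U' = [(B₁,ρ'),(B₂,τ)]`, one has `μ(R_N U') ≥ μ(R_N U)` for all `N`; in particular
`ρ ≺ ρ'` (i.e. `μ(R_N U) = O(μ(R_N U'))`), so every best ordering is optimal. -/
theorem statement19 {B₁ B₂ : Set H}
    (hB₁ : Orthonormal ℂ ((↑) : B₁ → H)) (hB₂ : Orthonormal ℂ ((↑) : B₂ → H))
    (ρ ρ' : ℕ ≃ B₁) (τ : ℕ ≃ B₂)
    (hbest : Antitone (fun N : ℕ => muPi ρ τ N)) :
    (∀ N : ℕ, muR ρ τ N ≤ muR ρ' τ N) ∧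
      (∃ C : ℝ, 0 < C ∧ ∀ N : ℕ, muR ρ τ N ≤ C * muR ρ' τ N) := by
  have hle : ∀ N, muR ρ τ N ≤ muR ρ' τ N := fun N => by
    obtain ⟨K, hKN, hK⟩ :=
      (ρ'.symm.injective.comp ρ.injective).exists_le_le_apply N
    calc muR ρ τ N ≤ muPi ρ τ K := muR_le_muPi_of_antitone hbest hKN
      _ = muPi ρ' τ (ρ'.symm (ρ K)) := (muPi_symm_apply ρ ρ' τ K).symm
      _ ≤ muR ρ' τ N := muPi_le_muR hB₁ hB₂ ρ' τ hK
  exact ⟨hle, 1, one_pos, fun N => (one_mul (muR ρ' τ N)).symm ▸ hle N⟩
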